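/- Define J_k(y) = ∑_{m=0}^∞ (−1)^m (y/2)^{2m+k}/(m!(m+k)!) for integers k ≥ 0. Then for all y ∈ ℝ and t ∈ ℝ, ∫₀^∞ e^{−λ} J₀(√(y² + 2λye^t)) dλ = ∑_{k=0}^∞ (−1)^k e^{kt} J_k(y), where J₀(√w) is interpreted via the entire even power series ∑_{m≥0}(−1)^m w^m/(4^m(m!)²), and the right-hand series converges absolutely. -/

import Mathlib

/-!
Writing `J₀(√(y² + 2λye^t))` as its power series and expanding `(y² + 2λye^t)^m` binomially
gives a double series `∑_{k,n} (-λe^t)^k / k! · (n-th term of J_k(y))`. The bound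
`|n-th term of J_k(y)| ≤ (y²/4)^n / n! · (|y|/2)^k / k!` makes it absolutely summable, even after
`λ^k` is replaced by `∫₀^∞ e^{-λ} λ^k dλ = k!`, so integration can be done term by term; summing
over `n` first then gives `∑_k (-e^t)^k J_k(y)`.
-/

/-- Bessel function of the first kind of integer order `k`, via its power series. -/
noncomputable def besselJ (k : ℕ) (y : ℝ) : ℝ :=
  ∑' m : ℕ, (-1) ^ m * (y / 2) ^ (2 * m + k)
    / ((Nat.factorial m : ℝ) * (Nat.factorial (m + k) : ℝ))

open MeasureTheory Real Set Finset
open scoped Nat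

theorem Summable.tsum_eq_tsum_sum_antidiagonal {α A : Type*} [AddCommGroup α] [UniformSpace α]
    [IsUniformAddGroup α] [CompleteSpace α] [T0Space α] [AddCommMonoid A] [HasAntidiagonal A]
    {f : A × A → α} (hf : Summable f) :
    ∑' p, f p = ∑' n, ∑ p ∈ antidiagonal n, f p := by
  rw [← HasAntidiagonal.sigmaAntidiagonalEquivProd.tsum_eq]
  exact (HasAntidiagonal.sigmaAntidiagonalEquivProd.summable_iff.mpr hf).tsum_sigma.trans
    (tsum_congr fun n => Finset.tsum_subtype (antidiagonal n) f)

theorem integrableOn_exp_neg_mul_pow (k : ℕ) :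
    IntegrableOn (fun x : ℝ => exp (-x) * x ^ k) (Ioi 0) :=
  (GammaIntegral_convergent (s := k + 1) (by positivity)).congr_fun
    (fun x _ => by simp [rpow_natCast]) measurableSet_Ioi

theorem integral_exp_neg_mul_pow (k : ℕ) : ∫ x in Ioi (0 : ℝ), exp (-x) * x ^ k = k ! := by
  rw [← Gamma_nat_eq_factorial, Gamma_eq_integral (by positivity)]
  exact setIntegral_congr_fun measurableSet_Ioi fun x _ => by simp [rpow_natCast]

theorem integral_exp_neg_mul_tsum {ι : Type*} [Countable ι] (a : ι → ℝ) (e : ι → ℕ)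
    (h : Summable fun i => |a i| * (e i)!) :
    ∫ x in Ioi (0 : ℝ), exp (-x) * ∑' i, a i * x ^ e i = ∑' i, a i * (e i)! := by
  have hint : ∀ i, Integrable (fun x => a i * (exp (-x) * x ^ e i)) (volume.restrict (Ioi 0)) :=
    fun i => (integrableOn_exp_neg_mul_pow (e i)).const_mul (a i)
  have hnorm : ∀ i, ∫ x in Ioi (0 : ℝ), ‖a i * (exp (-x) * x ^ e i)‖ = |a i| * (e i)! := fun i => by
    rw [← integral_exp_neg_mul_pow, ← integral_const_mul]
    refine setIntegral_congr_fun measurableSet_Ioi fun x (hx : 0 < x) => ?_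
    rw [norm_mul, Real.norm_eq_abs, norm_of_nonneg (by positivity)]
  calc ∫ x in Ioi (0 : ℝ), exp (-x) * ∑' i, a i * x ^ e i
      = ∫ x in Ioi (0 : ℝ), ∑' i, a i * (exp (-x) * x ^ e i) := by
        congr 1; ext x; rw [← tsum_mul_left]; congr 1; ext i; ring
    _ = ∑' i, ∫ x in Ioi (0 : ℝ), a i * (exp (-x) * x ^ e i) :=
        (integral_tsum_of_summable_integral_norm hint (h.congr fun i => (hnorm i).symm)).symm
    _ = ∑' i, a i * (e i)! :=
        tsum_congr fun i => by rw [integral_const_mul, integral_exp_neg_mul_pow]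

noncomputable def besselJTerm (k : ℕ) (y : ℝ) (n : ℕ) : ℝ :=
  (-1) ^ n * (y / 2) ^ (2 * n + k) / ((n ! : ℝ) * ((n + k)! : ℝ))

theorem besselJ_eq_tsum_besselJTerm (k : ℕ) (y : ℝ) : besselJ k y = ∑' n, besselJTerm k y n :=
  rfl

theorem abs_besselJTerm_le (k : ℕ) (y : ℝ) (n : ℕ) :
    |besselJTerm k y n| ≤ (y ^ 2 / 4) ^ n / n ! * ((|y| / 2) ^ k / k !) := by
  have hsplit : |y / 2| ^ (2 * n + k) = (y ^ 2 / 4) ^ n * (|y| / 2) ^ k := by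
    rw [pow_add, pow_mul, sq_abs, abs_div, abs_two]; ring
  rw [besselJTerm, abs_div, abs_mul, abs_pow, abs_pow, abs_neg, abs_one, one_pow, one_mul, hsplit,
    abs_of_pos (by positivity : (0 : ℝ) < n ! * (n + k)!), div_mul_div_comm]
  gcongr
  exact Nat.le_add_left k n

theorem summable_pow_mul_abs_besselJTerm (y : ℝ) {r : ℝ} (hr : 0 ≤ r) :
    Summable fun p : ℕ × ℕ => r ^ p.1 * |besselJTerm p.1 y p.2| := by
  have hprod := (summable_pow_div_factorial (|y| / 2 * r)).mul_of_nonneg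
    (summable_pow_div_factorial (y ^ 2 / 4)) (fun k => by positivity) (fun n => by positivity)
  refine hprod.of_nonneg_of_le (fun p => by positivity) fun ⟨k, n⟩ => ?_
  calc r ^ k * |besselJTerm k y n| ≤ r ^ k * ((y ^ 2 / 4) ^ n / n ! * ((|y| / 2) ^ k / k !)) := by
        gcongr; exact abs_besselJTerm_le k y n
    _ = (|y| / 2 * r) ^ k / k ! * ((y ^ 2 / 4) ^ n / n !) := by ring

/-- `J₀(√w)`, as an entire power series in `w`. -/
noncomputable def besselJZeroSqrt (w : ℝ) : ℝ :=
  ∑' m : ℕ, (-1) ^ m * w ^ m / (4 ^ m * (m ! : ℝ) ^ 2)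

theorem besselJZeroSqrt_sq_add (y s : ℝ) :
    besselJZeroSqrt (y ^ 2 + 2 * y * s)
      = ∑' p : ℕ × ℕ, (-s) ^ p.1 / p.1 ! * besselJTerm p.1 y p.2 := by
  have hs : Summable fun p : ℕ × ℕ => (-s) ^ p.1 / p.1 ! * besselJTerm p.1 y p.2 := by
    refine .of_norm_bounded (summable_pow_mul_abs_besselJTerm y (abs_nonneg s)) fun ⟨k, n⟩ => ?_
    simp only [norm_mul, norm_div, norm_pow, norm_neg, Real.norm_eq_abs, Nat.abs_cast]
    gcongr
    exact div_le_self (by positivity) (Nat.one_le_cast.mpr k.factorial_pos)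
  rw [hs.tsum_eq_tsum_sum_antidiagonal, besselJZeroSqrt]
  refine tsum_congr fun m => ?_
  rw [add_comm, (Commute.all _ _).add_pow', Finset.mul_sum, Finset.sum_div]
  refine Finset.sum_congr rfl fun ⟨k, n⟩ hkn => ?_
  obtain rfl : k + n = m := mem_antidiagonal.mp hkn
  have hchoose : ((k + n).choose k : ℝ) * k ! * n ! = (k + n)! := by
    rw [Nat.choose_symm_add]; exact_mod_cast Nat.add_choose_mul_factorial_mul_factorial k n
  have hfour : (4 : ℝ) ^ (k + n) = 2 ^ (2 * n + k) * 2 ^ k := by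
    rw [show (4 : ℝ) = 2 ^ 2 by norm_num, ← pow_mul, ← pow_add]; ring_nf
  rw [besselJTerm, nsmul_eq_mul, add_comm n k, ← hchoose, div_pow, hfour]
  field_simp
  ring

theorem integral_eq_bessel_series (y t : ℝ) :
    Summable (fun k : ℕ => |(-1 : ℝ) ^ k * Real.exp (k * t) * besselJ k y|) ∧
    ∫ l in Set.Ioi (0 : ℝ),
        Real.exp (-l) *
          (∑' m : ℕ, (-1) ^ m * (y ^ 2 + 2 * l * y * Real.exp t) ^ m
            / (4 ^ m * ((Nat.factorial m : ℝ)) ^ 2))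
      = ∑' k : ℕ, (-1) ^ k * Real.exp (k * t) * besselJ k y := by
  set a : ℕ × ℕ → ℝ := fun p => (-exp t) ^ p.1 * besselJTerm p.1 y p.2 with ha
  have hrow (k : ℕ) : (-1) ^ k * exp (k * t) * besselJ k y = ∑' n, a (k, n) := by
    rw [besselJ_eq_tsum_besselJTerm, ← tsum_mul_left, exp_nat_mul, ← mul_pow, neg_one_mul]
  have habs : Summable fun p => |a p| := by
    simpa only [ha, abs_mul, abs_pow, abs_neg, abs_exp] using
      summable_pow_mul_abs_besselJTerm y (exp_pos t).le
  have hfac (k : ℕ) : (k ! : ℝ) ≠ 0 := by positivity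
  simp_rw [hrow]
  refine ⟨habs.prod.of_nonneg_of_le (fun _ => abs_nonneg _) fun k => ?_, ?_⟩
  · simpa only [Real.norm_eq_abs] using norm_tsum_le_tsum_norm (f := fun n => a (k, n))
      (by simpa only [Real.norm_eq_abs] using habs.prod_factor k)
  calc ∫ l in Ioi (0 : ℝ), exp (-l) * besselJZeroSqrt (y ^ 2 + 2 * l * y * exp t)
      = ∫ l in Ioi (0 : ℝ), exp (-l) * ∑' p : ℕ × ℕ, a p / p.1 ! * l ^ p.1 := by
        congr 1; ext l
        rw [show 2 * l * y * exp t = 2 * y * (l * exp t) by ring, besselJZeroSqrt_sq_add]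
        congr 2; ext p; rw [ha, neg_mul_eq_mul_neg, mul_pow]; ring
    _ = ∑' p : ℕ × ℕ, a p / p.1 ! * p.1 ! :=
        integral_exp_neg_mul_tsum _ _ (habs.congr fun p => by
          rw [abs_div, Nat.abs_cast, div_mul_cancel₀ _ (hfac _)])
    _ = ∑' k, ∑' n, a (k, n) := by
        rw [tsum_congr fun p => div_mul_cancel₀ (a p) (hfac p.1)]
        exact (summable_abs_iff.mp habs).tsum_prod
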